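/- A group homomorphism ρ : Γ → G from the discrete Heisenberg group to the real Heisenberg group is injective if and only if its image ρ(Γ) is non-abelian. -/

import Mathlib

open Matrix

/-- A 3×3 matrix is upper unitriangular (Heisenberg) if it has the form
`[[1,a,c],[0,1,b],[0,0,1]]`. -/
def IsHeis {R : Type*} [CommRing R] (M : Matrix (Fin 3) (Fin 3) R) : Prop :=
  M = !![1, M 0 1, M 0 2; 0, 1, M 1 2; 0, 0, 1]

/-- The Heisenberg group over `R`: upper unitriangular 3×3 matrices under
matrix multiplication. -/
def Heis (R : Type*) [CommRing R] : Type _ := {M : Matrix (Fin 3) (Fin 3) R // IsHeis M}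

namespace Heis

variable {R : Type*} [CommRing R]

lemma isHeis_mk (a b c : R) : IsHeis !![1, a, c; 0, 1, b; 0, 0, 1] := by
  unfold IsHeis; ext i j; fin_cases i <;> fin_cases j <;> rfl

lemma exists_abc {M : Matrix (Fin 3) (Fin 3) R} (h : IsHeis M) :
    ∃ a b c, M = !![1, a, c; 0, 1, b; 0, 0, 1] := ⟨_, _, _, h⟩

lemma mul_mk (a b c a' b' c' : R) :
    !![1, a, c; 0, 1, b; 0, 0, 1] * !![1, a', c'; 0, 1, b'; 0, 0, 1]
      = !![1, a + a', c + a * b' + c'; 0, 1, b + b'; 0, 0, 1] := by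
  simp [Matrix.mul_fin_three]; ring_nf <;> simp

lemma inv_mul_mk (a b c : R) :
    !![1, -a, a * b - c; 0, 1, -b; 0, 0, 1] * !![1, a, c; 0, 1, b; 0, 0, 1]
      = !![1, 0, 0; 0, 1, 0; 0, 0, 1] := by
  rw [mul_mk]; norm_num; ring_nf

instance : Group (Heis R) where
  mul x y := ⟨x.1 * y.1, by
    obtain ⟨a, b, c, hx⟩ := exists_abc x.2
    obtain ⟨a', b', c', hy⟩ := exists_abc y.2
    rw [hx, hy, mul_mk]; exact isHeis_mk _ _ _⟩
  one := ⟨!![1, 0, 0; 0, 1, 0; 0, 0, 1], isHeis_mk 0 0 0⟩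
  inv x := ⟨!![1, -(x.1 0 1), x.1 0 1 * x.1 1 2 - x.1 0 2; 0, 1, -(x.1 1 2); 0, 0, 1],
    isHeis_mk _ _ _⟩
  mul_assoc x y z := Subtype.ext (mul_assoc x.1 y.1 z.1)
  one_mul x := Subtype.ext (by
    show !![1, 0, 0; 0, 1, 0; 0, 0, 1] * x.1 = x.1
    obtain ⟨a, b, c, hx⟩ := exists_abc x.2
    rw [hx, mul_mk]; norm_num)
  mul_one x := Subtype.ext (by
    show x.1 * !![1, 0, 0; 0, 1, 0; 0, 0, 1] = x.1
    obtain ⟨a, b, c, hx⟩ := exists_abc x.2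
    rw [hx, mul_mk]; norm_num)
  inv_mul_cancel x := Subtype.ext (by
    show !![1, -(x.1 0 1), x.1 0 1 * x.1 1 2 - x.1 0 2; 0, 1, -(x.1 1 2); 0, 0, 1] * x.1
        = !![1, 0, 0; 0, 1, 0; 0, 0, 1]
    obtain ⟨a, b, c, hx⟩ := exists_abc x.2
    rw [hx]; simpa using inv_mul_mk a b c)

lemma mul_val (x y : Heis R) : (x * y).1 = x.1 * y.1 := rfl
lemma one_val : (1 : Heis R).1 = !![1, 0, 0; 0, 1, 0; 0, 0, 1] := rfl

/-- The generator γ₁ of the discrete Heisenberg group. -/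
def γ₁ : Heis ℤ := ⟨!![1, 1, 0; 0, 1, 0; 0, 0, 1], isHeis_mk 1 0 0⟩

/-- The generator γ₂ of the discrete Heisenberg group. -/
def γ₂ : Heis ℤ := ⟨!![1, 0, 0; 0, 1, 1; 0, 0, 1], isHeis_mk 0 1 0⟩

end Heis

/-!
The discrete Heisenberg group Γ is generated by γ₁ and γ₂, and `z = ⁅γ₁, γ₂⁆ = mk 0 0 1`
generates its centre. If ρ γ₁ and ρ γ₂ commute, the image of ρ is therefore abelian. Otherwise
ρ z = ⁅ρ γ₁, ρ γ₂⁆ is a nontrivial central element of the real Heisenberg group, hence of infinite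
order, so ρ is injective on ⟨z⟩. Every nontrivial normal subgroup of Γ meets ⟨z⟩: for `g = mk a b c`
in the kernel, the commutators `⁅g, γ₂⁆ = z ^ a` and `⁅γ₁, g⁆ = z ^ b` also lie in the kernel, which
forces `a = b = 0` and then `c = 0`.
-/

open scoped commutatorElement

namespace Heis

section CommRing

variable {R : Type*} [CommRing R]

def mk (a b c : R) : Heis R := ⟨!![1, a, c; 0, 1, b; 0, 0, 1], isHeis_mk a b c⟩

lemma exists_eq_mk (g : Heis R) : ∃ a b c, g = mk a b c :=
  ⟨_, _, _, Subtype.ext g.2⟩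

lemma mk_inj {a b c a' b' c' : R} : mk a b c = mk a' b' c' ↔ a = a' ∧ b = b' ∧ c = c' := by
  refine ⟨fun h => ?_, by rintro ⟨rfl, rfl, rfl⟩; rfl⟩
  have h := congrArg Subtype.val h
  exact ⟨by simpa [mk] using congrFun₂ h 0 1, by simpa [mk] using congrFun₂ h 1 2,
    by simpa [mk] using congrFun₂ h 0 2⟩

lemma mk_mul_mk (a b c a' b' c' : R) :
    mk a b c * mk a' b' c' = mk (a + a') (b + b') (c + a * b' + c') :=
  Subtype.ext (mul_mk a b c a' b' c')

lemma mk_zero_zero_zero : (mk 0 0 0 : Heis R) = 1 := rfl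

lemma inv_mk (a b c : R) : (mk a b c)⁻¹ = mk (-a) (-b) (a * b - c) :=
  inv_eq_of_mul_eq_one_right (by rw [mk_mul_mk, ← mk_zero_zero_zero, mk_inj]; ring_nf; simp)

lemma commutatorElement_mk (a b c a' b' c' : R) :
    ⁅mk a b c, mk a' b' c'⁆ = mk 0 0 (a * b' - a' * b) := by
  rw [commutatorElement_def, inv_mk, inv_mk, mk_mul_mk, mk_mul_mk, mk_mul_mk, mk_inj]
  exact ⟨by ring, by ring, by ring⟩

lemma mk_zpow_of_mul_eq_zero {a b : R} (hab : a * b = 0) (c : R) (n : ℤ) :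
    mk a b c ^ n = mk (n * a) (n * b) (n * c) := by
  induction n using Int.induction_on with
  | zero => simp [← mk_zero_zero_zero]
  | succ n ih =>
    rw [_root_.zpow_add_one, ih, mk_mul_mk, mk_inj]
    refine ⟨by push_cast; ring, by push_cast; ring, ?_⟩
    push_cast; linear_combination (n : R) * hab
  | pred n ih =>
    rw [_root_.zpow_sub_one, ih, inv_mk, mk_mul_mk, mk_inj]
    refine ⟨by push_cast; ring, by push_cast; ring, ?_⟩
    push_cast; linear_combination ((n : R) + 1) * hab

lemma zpow_commutatorElement_eq_one_iff [IsAddTorsionFree R] {x y : Heis R} (hxy : ⁅x, y⁆ ≠ 1)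
    {n : ℤ} : ⁅x, y⁆ ^ n = 1 ↔ n = 0 := by
  obtain ⟨a, b, c, rfl⟩ := exists_eq_mk x
  obtain ⟨a', b', c', rfl⟩ := exists_eq_mk y
  rw [commutatorElement_mk, ← mk_zero_zero_zero, Ne, mk_inj] at hxy
  rw [commutatorElement_mk, mk_zpow_of_mul_eq_zero (zero_mul 0), ← mk_zero_zero_zero, mk_inj]
  simpa [← zsmul_eq_mul] using IsAddTorsionFree.zsmul_eq_zero_iff_left fun h => hxy ⟨rfl, rfl, h⟩

end CommRing

lemma γ₁_eq_mk : γ₁ = mk 1 0 0 := rfl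

lemma γ₂_eq_mk : γ₂ = mk 0 1 0 := rfl

lemma γ₁_mul_γ₂_ne : γ₁ * γ₂ ≠ γ₂ * γ₁ := by
  rw [γ₁_eq_mk, γ₂_eq_mk, mk_mul_mk, mk_mul_mk, Ne, mk_inj]
  decide

lemma mk_zero_zero_eq_zpow (n : ℤ) : mk 0 0 n = ⁅γ₁, γ₂⁆ ^ n := by
  rw [γ₁_eq_mk, γ₂_eq_mk, commutatorElement_mk, mk_zpow_of_mul_eq_zero (zero_mul 0)]
  simp

lemma mk_eq_zpow_mul_zpow_mul_zpow (a b c : ℤ) :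
    mk a b c = γ₁ ^ a * γ₂ ^ b * ⁅γ₁, γ₂⁆ ^ (c - a * b) := by
  rw [← mk_zero_zero_eq_zpow, γ₁_eq_mk, γ₂_eq_mk, mk_zpow_of_mul_eq_zero (mul_zero 1),
    mk_zpow_of_mul_eq_zero (zero_mul 1), mk_mul_mk, mk_mul_mk, mk_inj]
  simp

lemma closure_γ₁_γ₂ : Subgroup.closure {γ₁, γ₂} = ⊤ := by
  refine eq_top_iff.mpr fun g _ => ?_
  have h₁ : γ₁ ∈ Subgroup.closure {γ₁, γ₂} := Subgroup.subset_closure (by simp)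
  have h₂ : γ₂ ∈ Subgroup.closure {γ₁, γ₂} := Subgroup.subset_closure (by simp)
  obtain ⟨a, b, c, rfl⟩ := exists_eq_mk g
  rw [mk_eq_zpow_mul_zpow_mul_zpow, commutatorElement_def]
  exact mul_mem (mul_mem (zpow_mem h₁ _) (zpow_mem h₂ _))
    (zpow_mem (mul_mem (mul_mem (mul_mem h₁ h₂) (inv_mem h₁)) (inv_mem h₂)) _)

variable {H : Type*} [Group H]

lemma range_mul_comm_of_commute (ρ : Heis ℤ →* H) (hρ : Commute (ρ γ₁) (ρ γ₂)) :
    ∀ x ∈ ρ.range, ∀ y ∈ ρ.range, x * y = y * x := by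
  rw [← isMulCommutative_iff_of_setLike, MonoidHom.range_eq_map, ← closure_γ₁_γ₂,
    MonoidHom.map_closure, Set.image_pair]
  refine Subgroup.isMulCommutative_closure ?_
  simp only [Set.mem_insert_iff, Set.mem_singleton_iff]
  rintro x (rfl | rfl) y (rfl | rfl)
  exacts [rfl, hρ, hρ.symm, rfl]

lemma injective_of_map_zpow_commutatorElement (ρ : Heis ℤ →* H)
    (hρ : ∀ n : ℤ, ρ (⁅γ₁, γ₂⁆ ^ n) = 1 → n = 0) : Function.Injective ρ := by
  have hcentral (n : ℤ) (h : ρ (mk 0 0 n) = 1) : n = 0 := hρ n (mk_zero_zero_eq_zpow n ▸ h)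
  refine (injective_iff_map_eq_one ρ).mpr fun g hg => ?_
  obtain ⟨a, b, c, rfl⟩ := exists_eq_mk g
  have ha : a = 0 := hcentral a <| by
    have h : ⁅mk a b c, γ₂⁆ = mk 0 0 a := by
      rw [γ₂_eq_mk]; simpa using commutatorElement_mk a b c 0 1 0
    rw [← h, map_commutatorElement, hg, commutatorElement_one_left]
  have hb : b = 0 := hcentral b <| by
    have h : ⁅γ₁, mk a b c⁆ = mk 0 0 b := by
      rw [γ₁_eq_mk]; simpa using commutatorElement_mk 1 0 0 a b c
    rw [← h, map_commutatorElement, hg, commutatorElement_one_right]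
  subst ha hb
  rw [hcentral c hg, mk_zero_zero_zero]

end Heis

/-- A homomorphism ρ : Γ → G from the discrete to the real Heisenberg group is
injective iff its image is non-abelian. -/
theorem injective_iff_image_nonabelian (ρ : Heis ℤ →* Heis ℝ) :
    Function.Injective ρ ↔ ¬ ∀ x ∈ ρ.range, ∀ y ∈ ρ.range, x * y = y * x := by
  refine ⟨fun hρ hcomm => Heis.γ₁_mul_γ₂_ne (hρ ?_), fun hnc => ?_⟩
  · simpa only [map_mul] using hcomm _ ⟨Heis.γ₁, rfl⟩ _ ⟨Heis.γ₂, rfl⟩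
  have hne : ⁅ρ Heis.γ₁, ρ Heis.γ₂⁆ ≠ 1 := fun h =>
    hnc (Heis.range_mul_comm_of_commute ρ (commutatorElement_eq_one_iff_commute.mp h))
  refine Heis.injective_of_map_zpow_commutatorElement ρ fun n hn => ?_
  rwa [map_zpow, map_commutatorElement, Heis.zpow_commutatorElement_eq_one_iff hne] at hn
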